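/- arXiv:2511.11365 — 3 statements merged into one kernel-verified Lean document; each statement's English description precedes it below -/
import Mathlib

section
/- Consider an election with parties ordered along a common single-peakedness axis. If the leftmost party P_L nominates its rightmost candidate and the rightmost party P_R nominates its leftmost candidate (a 'centrist' nomination scheme), then neither P_L nor P_R has a Nash deviation: if P_L's nominee is not a Plurality winner, no other candidate of P_L can become a winner by replacing the nominee (and symmetrically for P_R). -/
/-- The vote `succ` is single-peaked with respect to the axis `lt`:
for all `a ◁ b ◁ c`, if `a ≻ b` then `b ≻ c`. -/
def SinglePeakedWith {C : Type*} (succ lt : C → C → Prop) : Prop :=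
  ∀ a b c : C, lt a b → lt b c → succ a b → succ b c

/-- Party-aligned single-peakedness of a single vote, where parties are indexed by
naturals and the party axis is the natural order of the indices: there is a
perceived candidate axis, compatible with the party axis, with respect to which
the vote is single-peaked. -/
def PASPVote {C : Type*} (party : C → ℕ) (succ : C → C → Prop) : Prop :=
  ∃ lt : C → C → Prop, IsStrictTotalOrder C lt ∧
    (∀ c c' : C, lt c c' → party c ≤ party c') ∧
    SinglePeakedWith succ lt

/-- A nomination scheme: one nominee of party `i` for each `i ∈ {1,…,k}`. -/
def ValidNom {C : Type*} (party : C → ℕ) (k : ℕ) (nom : ℕ → C) : Prop :=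
  ∀ i ∈ Finset.Icc 1 k, party (nom i) = i

/-- The set of voters whose favourite nominee is the nominee of party `i`. -/
def votesFor {C V : Type*} (succ : V → C → C → Prop) (k : ℕ) (nom : ℕ → C)
    (i : ℕ) : Set V :=
  {v | ∀ i' ∈ Finset.Icc 1 k, i' ≠ i → succ v (nom i) (nom i')}

/-- Plurality score of party `i`'s nominee in the reduced election. -/
noncomputable def score {C V : Type*} (succ : V → C → C → Prop) (k : ℕ)
    (nom : ℕ → C) (i : ℕ) : ℕ :=
  (votesFor succ k nom i).ncard

/-- Party `i`'s nominee is a Plurality winner of the reduced election. -/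
def IsWinner {C V : Type*} (succ : V → C → C → Prop) (k : ℕ) (nom : ℕ → C)
    (i : ℕ) : Prop :=
  ∀ i' ∈ Finset.Icc 1 k, score succ k nom i' ≤ score succ k nom i

/-- `c'` is a Nash deviation by party `i` for the nomination scheme `nom`. -/
def NashDeviation {C V : Type*} (party : C → ℕ) (succ : V → C → C → Prop)
    (k : ℕ) (nom : ℕ → C) (i : ℕ) (c' : C) : Prop :=
  party c' = i ∧ c' ≠ nom i ∧ ¬ IsWinner succ k nom i ∧
    IsWinner succ k (Function.update nom i c') i

/-- A nomination scheme is a pure Nash equilibrium if no party has a Nash deviation. -/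
def NashEq {C V : Type*} (party : C → ℕ) (succ : V → C → C → Prop) (k : ℕ)
    (nom : ℕ → C) : Prop :=
  ∀ i ∈ Finset.Icc 1 k, ∀ c' : C, ¬ NashDeviation party succ k nom i c'

/-!
A deviation `c'` of party `i` can only hurt `i` if every ballot ranks the nominee `nom i` at least
as well as `c'` relative to every other nominee: then the swap takes no voter from any rival and
gives none to `i`. For the leftmost party nominating its rightmost candidate, `nom i` lies on the
axis strictly between any `c'` of its party and every other nominee, and single-peakedness says
that a candidate lying between two others is never ranked below both of them. The rightmost party
is the same situation on the reversed axis.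
-/

open Finset Function

namespace SinglePeakedWith

variable {C : Type*} {succ lt : C → C → Prop} [IsStrictTotalOrder C succ]

theorem succ_mid_of_succ (hsp : SinglePeakedWith succ lt) {a b c : C} (hab : lt a b)
    (hbc : lt b c) (h : succ a c) : succ b c := by
  rcases trichotomous_of succ a b with hab' | rfl | hba
  · exact hsp a b c hab hbc hab'
  · exact h
  · exact _root_.trans hba h

theorem succ_of_succ_mid (hsp : SinglePeakedWith succ lt) {a b c : C} (hab : lt a b)
    (hbc : lt b c) (h : succ c b) : succ c a := by
  rcases trichotomous_of succ c a with hca | rfl | hac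
  · exact hca
  · exact absurd (hsp c b c hab hbc h) (asymm h)
  · exact absurd (hsp.succ_mid_of_succ hab hbc hac) (asymm h)

theorem flip [Std.Irrefl lt] (hsp : SinglePeakedWith succ lt) :
    SinglePeakedWith succ (flip lt) := by
  intro a b c (hba : lt b a) (hcb : lt c b) h
  rcases trichotomous_of succ b c with hbc | rfl | hcb'
  · exact hbc
  · exact absurd hcb (irrefl _)
  · exact absurd (hsp c b a hcb hba hcb') (asymm h)

end SinglePeakedWith

theorem lt_of_party_lt {C : Type*} {lt : C → C → Prop} [Std.Trichotomous lt]
    {party : C → ℕ} (hcompat : ∀ c c' : C, lt c c' → party c ≤ party c') {a b : C}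
    (h : party a < party b) : lt a b := by
  rcases trichotomous_of lt a b with hab | rfl | hba
  · exact hab
  · exact absurd h (lt_irrefl _)
  · exact absurd (hcompat b a hba) (not_le.mpr h)

section Deviation

variable {C V : Type*} {succ : V → C → C → Prop} {k i : ℕ} {nom : ℕ → C} {c' : C}

theorem votesFor_update_self_subset
    (h : ∀ v, ∀ j ∈ Icc 1 k, j ≠ i → succ v c' (nom j) → succ v (nom i) (nom j)) :
    votesFor succ k (update nom i c') i ⊆ votesFor succ k nom i := by
  intro v hv j hj hji
  have hvj := hv j hj hji
  rw [update_self, update_of_ne hji] at hvj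
  exact h v j hj hji hvj

theorem votesFor_subset_votesFor_update {j : ℕ} (hji : j ≠ i)
    (h : ∀ v, succ v (nom j) (nom i) → succ v (nom j) c') :
    votesFor succ k nom j ⊆ votesFor succ k (update nom i c') j := by
  intro v hv j' hj' hj'j
  rw [update_of_ne hji]
  rcases eq_or_ne j' i with rfl | hj'i
  · rw [update_self]
    exact h v (hv j' hj' hj'j)
  · rw [update_of_ne hj'i]
    exact hv j' hj' hj'j

theorem not_nashDeviation_of_dominated [Finite V] (party : C → ℕ)
    (hlose : ∀ v, ∀ j ∈ Icc 1 k, j ≠ i → succ v c' (nom j) → succ v (nom i) (nom j))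
    (hgain : ∀ v, ∀ j ∈ Icc 1 k, j ≠ i → succ v (nom j) (nom i) → succ v (nom j) c') :
    ¬ NashDeviation party succ k nom i c' := by
  rintro ⟨-, -, hnotwin, hwin⟩
  obtain ⟨j, hj, hbeaten⟩ : ∃ j ∈ Icc 1 k, score succ k nom i < score succ k nom j := by
    simpa [IsWinner, and_assoc] using hnotwin
  have hji : j ≠ i := by
    rintro rfl
    exact lt_irrefl _ hbeaten
  refine absurd (hwin j hj) (not_le.mpr ?_)
  calc score succ k (update nom i c') i
      ≤ score succ k nom i := Set.ncard_le_ncard (votesFor_update_self_subset hlose)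
    _ < score succ k nom j := hbeaten
    _ ≤ score succ k (update nom i c') j :=
      Set.ncard_le_ncard (votesFor_subset_votesFor_update hji (hgain · j hj hji))

theorem not_nashDeviation_of_between [Finite V] (party : C → ℕ) {lt : C → C → Prop}
    (hsto : ∀ v : V, IsStrictTotalOrder C (succ v))
    (hsp : ∀ v : V, SinglePeakedWith (succ v) lt)
    (hc' : lt c' (nom i)) (hnom : ∀ j ∈ Icc 1 k, j ≠ i → lt (nom i) (nom j)) :
    ¬ NashDeviation party succ k nom i c' :=
  not_nashDeviation_of_dominated party
    (fun v j hj hji => haveI := hsto v; (hsp v).succ_mid_of_succ hc' (hnom j hj hji))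
    (fun v j hj hji => haveI := hsto v; (hsp v).succ_of_succ_mid hc' (hnom j hj hji))

end Deviation

theorem centrist_no_deviation_general
    {C V : Type*} [Fintype V] {k : ℕ}
    (party : C → ℕ)
    (lt : C → C → Prop) (hlt : IsStrictTotalOrder C lt)
    (hcompat : ∀ c c' : C, lt c c' → party c ≤ party c')
    (succ : V → C → C → Prop) (hsto : ∀ v : V, IsStrictTotalOrder C (succ v))
    (hsp : ∀ v : V, SinglePeakedWith (succ v) lt)
    (nom : ℕ → C) (hnom : ValidNom party k nom)
    (hL : ∀ c : C, party c = 1 → c ≠ nom 1 → lt c (nom 1))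
    (hR : ∀ c : C, party c = k → c ≠ nom k → lt (nom k) c) :
    (∀ c' : C, ¬ NashDeviation party succ k nom 1 c') ∧
    (∀ c' : C, ¬ NashDeviation party succ k nom k c') := by
  have hends : ∀ {j}, j ∈ Icc 1 k → 1 ∈ Icc 1 k ∧ k ∈ Icc 1 k := fun hj => by
    simp only [mem_Icc] at hj ⊢
    omega
  constructor
  · refine fun c' hdev => not_nashDeviation_of_between party hsto hsp
      (hL c' hdev.1 hdev.2.1) (fun j hj hj1 => lt_of_party_lt hcompat ?_) hdev
    rw [hnom 1 (hends hj).1, hnom j hj]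
    simp only [mem_Icc] at hj
    omega
  · have hsp' : ∀ v, SinglePeakedWith (succ v) (flip lt) := fun v =>
      haveI := hsto v; (hsp v).flip
    refine fun c' hdev => not_nashDeviation_of_between party hsto hsp'
      (hR c' hdev.1 hdev.2.1) (fun j hj hjk => lt_of_party_lt hcompat ?_) hdev
    rw [hnom k (hends hj).2, hnom j hj]
    simp only [mem_Icc] at hj
    omega

/-- In a centrist nomination scheme (the leftmost party nominates its rightmost
candidate and the rightmost party its leftmost candidate), neither the leftmost
nor the rightmost party has a Nash deviation.  Here all votes are single-peaked
with respect to the common axis `lt`, along which parties occupy consecutive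
positions (`lt c c' → party c ≤ party c'`). -/
theorem centrist_no_deviation
    {C V : Type*} [Fintype V] {k : ℕ} (hk : 1 ≤ k)
    (party : C → ℕ) (hpr : ∀ c : C, party c ∈ Finset.Icc 1 k)
    (hne : ∀ i ∈ Finset.Icc 1 k, ∃ c : C, party c = i)
    (lt : C → C → Prop) (hlt : IsStrictTotalOrder C lt)
    (hcompat : ∀ c c' : C, lt c c' → party c ≤ party c')
    (succ : V → C → C → Prop) (hsto : ∀ v : V, IsStrictTotalOrder C (succ v))
    (hsp : ∀ v : V, SinglePeakedWith (succ v) lt)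
    (nom : ℕ → C) (hnom : ValidNom party k nom)
    (hL : ∀ c : C, party c = 1 → c ≠ nom 1 → lt c (nom 1))
    (hR : ∀ c : C, party c = k → c ≠ nom k → lt (nom k) c) :
    (∀ c' : C, ¬ NashDeviation party succ k nom 1 c') ∧
    (∀ c' : C, ¬ NashDeviation party succ k nom k c') :=
  centrist_no_deviation_general party lt hlt hcompat succ hsto hsp nom hnom hL hR
end

section
/- A voter v votes for the nominee of party P_i in every nomination scheme (irrespective of which candidates are nominated by any party) if and only if the top |P_i| candidates in v's strict preference order are exactly the candidates of P_i. -/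
theorem exists_validNom {C : Type*} [Nonempty C] {k : ℕ} {party : C → ℕ}
    (hne : ∀ i ∈ Finset.Icc 1 k, ∃ c : C, party c = i) :
    ∃ nom : ℕ → C, ValidNom party k nom := by
  refine ⟨fun m => if hm : m ∈ Finset.Icc 1 k then (hne m hm).choose else Classical.arbitrary C,
    fun m hm => ?_⟩
  simpa only [dif_pos hm] using (hne m hm).choose_spec

theorem ValidNom.update {C : Type*} {k : ℕ} {party : C → ℕ} {nom : ℕ → C}
    (hnom : ValidNom party k nom) (c : C) :
    ValidNom party k (Function.update nom (party c) c) := by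
  intro m hm
  rcases eq_or_ne m (party c) with rfl | h
  · simp
  · simpa [h] using hnom m hm

theorem mem_votesFor_of_party_preferred {C V : Type*} {k : ℕ} {party : C → ℕ}
    {succ : V → C → C → Prop} {nom : ℕ → C} {i : ℕ} {v : V}
    (hnom : ValidNom party k nom) (hi : i ∈ Finset.Icc 1 k)
    (hv : ∀ c c' : C, party c = i → party c' ≠ i → succ v c c') :
    v ∈ votesFor succ k nom i :=
  fun i' hi' hi'i => hv _ _ (hnom i hi) (by rwa [hnom i' hi'])

theorem always_votes_iff_top_party_general
    {C V : Type*} {k : ℕ}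
    (party : C → ℕ) (hpr : ∀ c : C, party c ∈ Finset.Icc 1 k)
    (hne : ∀ i ∈ Finset.Icc 1 k, ∃ c : C, party c = i)
    (succ : V → C → C → Prop)
    (i : ℕ) (hi : i ∈ Finset.Icc 1 k) (v : V) :
    (∀ nom : ℕ → C, ValidNom party k nom → v ∈ votesFor succ k nom i) ↔
      (∀ c c' : C, party c = i → party c' ≠ i → succ v c c') := by
  refine ⟨fun H c c' hc hc' => ?_, fun H nom hnom => mem_votesFor_of_party_preferred hnom hi H⟩
  have : Nonempty C := ⟨c⟩
  obtain ⟨nom₀, hnom₀⟩ := exists_validNom hne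
  have hvalid := (hnom₀.update c').update c
  have hvote := H _ hvalid (party c') (hpr c') hc'
  subst hc
  simpa [Function.update_of_ne hc'] using hvote

/-- A voter `v` votes for the nominee of party `P_i` in every nomination scheme
if and only if the top `|P_i|` candidates of `v`'s preference order are exactly
the candidates of `P_i`, i.e. `v` prefers every candidate of `P_i` to every
candidate outside `P_i`. -/
theorem always_votes_iff_top_party
    {C V : Type*} [Fintype C] {k : ℕ}
    (party : C → ℕ) (hpr : ∀ c : C, party c ∈ Finset.Icc 1 k)
    (hne : ∀ i ∈ Finset.Icc 1 k, ∃ c : C, party c = i)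
    (succ : V → C → C → Prop) (hsto : ∀ v : V, IsStrictTotalOrder C (succ v))
    (i : ℕ) (hi : i ∈ Finset.Icc 1 k) (v : V) :
    (∀ nom : ℕ → C, ValidNom party k nom → v ∈ votesFor succ k nom i) ↔
      (∀ c c' : C, party c = i → party c' ≠ i → succ v c c') :=
  always_votes_iff_top_party_general party hpr hne succ i hi v
end

section
/- A candidate c_κ of the distinguished party P_κ is a Plurality winner with score s* in the reduced election of some nomination scheme if and only if there exist non-negative integers s_l and s_r with s_l + s_r − |V^{P_κ}| = s* such that s_l is a left-PP-viable score for c_κ and s_r is a right-PP-viable score for c_κ. -/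
/-- Voters who vote for party `i`'s nominee in every nomination scheme. -/
def AlwaysFor {C V : Type*} (party : C → ℕ) (succ : V → C → C → Prop)
    (k i : ℕ) : Set V :=
  {v | ∀ nom : ℕ → C, ValidNom party k nom → v ∈ votesFor succ k nom i}

/-- Voters, not in `AlwaysFor i` or `AlwaysFor (i+1)`, who always vote for the
nominee of party `i` or of party `i+1`. -/
def BetweenFor {C V : Type*} (party : C → ℕ) (succ : V → C → C → Prop)
    (k i : ℕ) : Set V :=
  {v | v ∉ AlwaysFor party succ k i ∧ v ∉ AlwaysFor party succ k (i + 1) ∧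
    ∀ nom : ℕ → C, ValidNom party k nom →
      (v ∈ votesFor succ k nom i ∨ v ∈ votesFor succ k nom (i + 1))}

/-- The voter set `V_{≤ i}`. -/
def Vle {C V : Type*} (party : C → ℕ) (succ : V → C → C → Prop)
    (k i : ℕ) : Set V :=
  (⋃ j ∈ Finset.Icc 1 i, AlwaysFor party succ k j) ∪
    (⋃ j ∈ Finset.Icc 1 (i - 1), BetweenFor party succ k j)

/-- The voter set `V_{≥ i}`. -/
def Vge {C V : Type*} (party : C → ℕ) (succ : V → C → C → Prop)
    (k i : ℕ) : Set V :=
  (⋃ j ∈ Finset.Icc i k, AlwaysFor party succ k j) ∪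
    (⋃ j ∈ Finset.Icc i (k - 1), BetweenFor party succ k j)

/-- `nom` extends the partial nomination scheme `cs` given on positions `1,…,i`. -/
def Extends {C : Type*} (i : ℕ) (cs nom : ℕ → C) : Prop :=
  ∀ j ∈ Finset.Icc 1 i, nom j = cs j

/-- `nom` extends the partial nomination scheme `cs` given on positions `i,…,k`. -/
def ExtendsR {C : Type*} (i k : ℕ) (cs nom : ℕ → C) : Prop :=
  ∀ j ∈ Finset.Icc i k, nom j = cs j

/-- Number of votes obtained by party `j`'s nominee from the voters in `W`. -/
noncomputable def votesFrom {C V : Type*} (W : Set V) (succ : V → C → C → Prop)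
    (k : ℕ) (nom : ℕ → C) (j : ℕ) : ℕ :=
  (W ∩ votesFor succ k nom j).ncard

/-- A left-feasible partial nomination scheme for `i` (with target score `sstar`):
condition (α) plus the no-deviation condition (β). -/
def LeftFeasible {C V : Type*} (party : C → ℕ) (succ : V → C → C → Prop)
    (k sstar i : ℕ) (cs : ℕ → C) : Prop :=
  (∀ j ∈ Finset.Icc 1 i, party (cs j) = j) ∧
  ∀ nom : ℕ → C, ValidNom party k nom → Extends i cs nom →
    ∀ j ∈ Finset.Icc 1 (i - 1),
      votesFrom (Vle party succ k i) succ k nom j ≤ sstar ∧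
      (votesFrom (Vle party succ k i) succ k nom j < sstar →
        ∀ c' : C, party c' = j → c' ≠ cs j →
          votesFrom (Vle party succ k i) succ k (Function.update nom j c') j < sstar)

/-- A right-feasible partial nomination scheme for `i`. -/
def RightFeasible {C V : Type*} (party : C → ℕ) (succ : V → C → C → Prop)
    (k sstar i : ℕ) (cs : ℕ → C) : Prop :=
  (∀ j ∈ Finset.Icc i k, party (cs j) = j) ∧
  ∀ nom : ℕ → C, ValidNom party k nom → ExtendsR i k cs nom →
    ∀ j ∈ Finset.Icc (i + 1) k,
      votesFrom (Vge party succ k i) succ k nom j ≤ sstar ∧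
      (votesFrom (Vge party succ k i) succ k nom j < sstar →
        ∀ c' : C, party c' = j → c' ≠ cs j →
          votesFrom (Vge party succ k i) succ k (Function.update nom j c') j < sstar)

/-- A left-PP-feasible partial nomination scheme for `i`: only condition (α). -/
def LeftPPFeasible {C V : Type*} (party : C → ℕ) (succ : V → C → C → Prop)
    (k sstar i : ℕ) (cs : ℕ → C) : Prop :=
  (∀ j ∈ Finset.Icc 1 i, party (cs j) = j) ∧
  ∀ nom : ℕ → C, ValidNom party k nom → Extends i cs nom →
    ∀ j ∈ Finset.Icc 1 (i - 1),
      votesFrom (Vle party succ k i) succ k nom j ≤ sstar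

/-- A right-PP-feasible partial nomination scheme for `i`. -/
def RightPPFeasible {C V : Type*} (party : C → ℕ) (succ : V → C → C → Prop)
    (k sstar i : ℕ) (cs : ℕ → C) : Prop :=
  (∀ j ∈ Finset.Icc i k, party (cs j) = j) ∧
  ∀ nom : ℕ → C, ValidNom party k nom → ExtendsR i k cs nom →
    ∀ j ∈ Finset.Icc (i + 1) k,
      votesFrom (Vge party succ k i) succ k nom j ≤ sstar

/-- The pair `(s, s')` is left-viable for the candidate pair `(c, c')` of
parties `P_{i-1}` and `P_i`. -/
def LeftViablePair {C V : Type*} (party : C → ℕ) (succ : V → C → C → Prop)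
    (k sstar i : ℕ) (c c' : C) (s s' : ℕ) : Prop :=
  ∃ cs : ℕ → C, LeftFeasible party succ k sstar i cs ∧
    cs (i - 1) = c ∧ cs i = c' ∧
    ∀ nom : ℕ → C, ValidNom party k nom → Extends i cs nom →
      votesFrom (Vle party succ k i) succ k nom (i - 1) = s ∧
      votesFrom (Vle party succ k i) succ k nom i = s'

/-- `s` is a left-viable score for candidate `c` of party `P_i`. -/
def LeftViableScore {C V : Type*} (party : C → ℕ) (succ : V → C → C → Prop)
    (k sstar i : ℕ) (c : C) (s : ℕ) : Prop :=
  ∃ cs : ℕ → C, LeftFeasible party succ k sstar i cs ∧ cs i = c ∧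
    ∀ nom : ℕ → C, ValidNom party k nom → Extends i cs nom →
      votesFrom (Vle party succ k i) succ k nom i = s

/-- `s` is a right-viable score for candidate `c` of party `P_i`. -/
def RightViableScore {C V : Type*} (party : C → ℕ) (succ : V → C → C → Prop)
    (k sstar i : ℕ) (c : C) (s : ℕ) : Prop :=
  ∃ cs : ℕ → C, RightFeasible party succ k sstar i cs ∧ cs i = c ∧
    ∀ nom : ℕ → C, ValidNom party k nom → ExtendsR i k cs nom →
      votesFrom (Vge party succ k i) succ k nom i = s

/-- `s` is a left-PP-viable score for candidate `c` of party `P_i`. -/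
def LeftPPViableScore {C V : Type*} (party : C → ℕ) (succ : V → C → C → Prop)
    (k sstar i : ℕ) (c : C) (s : ℕ) : Prop :=
  ∃ cs : ℕ → C, LeftPPFeasible party succ k sstar i cs ∧ cs i = c ∧
    ∀ nom : ℕ → C, ValidNom party k nom → Extends i cs nom →
      votesFrom (Vle party succ k i) succ k nom i = s

/-- `s` is a right-PP-viable score for candidate `c` of party `P_i`. -/
def RightPPViableScore {C V : Type*} (party : C → ℕ) (succ : V → C → C → Prop)
    (k sstar i : ℕ) (c : C) (s : ℕ) : Prop :=
  ∃ cs : ℕ → C, RightPPFeasible party succ k sstar i cs ∧ cs i = c ∧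
    ∀ nom : ℕ → C, ValidNom party k nom → ExtendsR i k cs nom →
      votesFrom (Vge party succ k i) succ k nom i = s

/-! Under party-aligned single-peakedness, as the nomination scheme varies, a voter's favourite
nominee can only move between two adjacent parties, so every voter voting for party `j` lies in
`AlwaysFor j`, `BetweenFor (j-1)` or `BetweenFor j`. Consequently every vote for a party left of
`κ` comes from `V_{≤κ}`, a voter of `V_{≤κ}` votes for a party in `1,…,κ` determined by the
nominees of those parties alone, and `V_{≤κ} ∩ V_{≥κ} = V^{P_κ}`; symmetrically on the right.
By inclusion–exclusion the score of `c_κ` is `s_l + s_r - |V^{P_κ}|`. So a winning scheme splits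
into two PP-feasible halves, and two PP-feasible halves sharing `c_κ` glue to a scheme in which
no party beats `c_κ`. -/

section PartyAlignedSinglePeaked

variable {C V : Type*} {party : C → ℕ} {succ : V → C → C → Prop} {k : ℕ}

lemma exists_mem_votesFor (hsto : ∀ v : V, IsStrictTotalOrder C (succ v))
    {nom : ℕ → C} (hval : ValidNom party k nom) (hk : 1 ≤ k) (v : V) :
    ∃ i ∈ Finset.Icc 1 k, v ∈ votesFor succ k nom i := by
  classical
  have := hsto v
  let := linearOrderOfSTO (succ v)
  obtain ⟨i, hi, hmin⟩ := (Finset.Icc 1 k).exists_min_image nom ⟨1, by simp [hk]⟩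
  refine ⟨i, hi, fun i' hi' hne => lt_of_le_of_ne (hmin i' hi') fun h => hne ?_⟩
  rw [← hval i' hi', ← hval i hi, h]

lemma eq_of_mem_votesFor_of_agree (hsto : ∀ v : V, IsStrictTotalOrder C (succ v))
    {nom nom' : ℕ → C} {i j : ℕ} (hi : i ∈ Finset.Icc 1 k) (hj : j ∈ Finset.Icc 1 k)
    (hagree_i : nom i = nom' i) (hagree_j : nom j = nom' j) {v : V}
    (hvi : v ∈ votesFor succ k nom i) (hvj : v ∈ votesFor succ k nom' j) : i = j := by
  by_contra hij
  have := hsto v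
  have hpref := hvi j hj (Ne.symm hij)
  have hpref' := hvj i hi hij
  rw [hagree_i, hagree_j] at hpref
  exact asymm_of (succ v) hpref hpref'

lemma eq_of_mem_votesFor (hsto : ∀ v : V, IsStrictTotalOrder C (succ v))
    {nom : ℕ → C} {i j : ℕ} (hi : i ∈ Finset.Icc 1 k) (hj : j ∈ Finset.Icc 1 k) {v : V}
    (hvi : v ∈ votesFor succ k nom i) (hvj : v ∈ votesFor succ k nom j) : i = j :=
  eq_of_mem_votesFor_of_agree hsto hi hj rfl rfl hvi hvj

/-- The voter prefers `nom i` to `nom (i+1)` and `nom' j` to `nom' (i+1)`; if `i + 2 ≤ j`, both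
`(i+1)`-nominees lie strictly between `nom i` and `nom' j` on the voter's axis, and
single-peakedness makes `nom' (i+1)` preferred to `nom' j`. -/
lemma le_succ_of_mem_votesFor (hsto : ∀ v : V, IsStrictTotalOrder C (succ v))
    (hPASP : ∀ v : V, PASPVote party (succ v))
    {nom nom' : ℕ → C} (hval : ValidNom party k nom) (hval' : ValidNom party k nom')
    {i j : ℕ} (hi : i ∈ Finset.Icc 1 k) (hj : j ∈ Finset.Icc 1 k) {v : V}
    (hvi : v ∈ votesFor succ k nom i) (hvj : v ∈ votesFor succ k nom' j) : j ≤ i + 1 := by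
  by_contra! hij
  obtain ⟨lt, hlt, hmono, hsp⟩ := hPASP v
  have := hsto v
  have axis : ∀ c c' : C, party c < party c' → lt c c' := by
    intro c c' h
    rcases (haveI := hlt; trichotomous_of lt c c') with h' | rfl | h'
    · exact h'
    · exact absurd h (lt_irrefl _)
    · exact absurd (hmono _ _ h') (not_le.2 h)
  simp only [Finset.mem_Icc] at hi hj
  have hmid : i + 1 ∈ Finset.Icc 1 k := by simp only [Finset.mem_Icc]; omega
  have ha : party (nom i) = i := hval i (by simp only [Finset.mem_Icc]; omega)
  have hx : party (nom (i + 1)) = i + 1 := hval (i + 1) hmid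
  have hy : party (nom' (i + 1)) = i + 1 := hval' (i + 1) hmid
  have hb : party (nom' j) = j := hval' j (by simp only [Finset.mem_Icc]; omega)
  have hax : succ v (nom i) (nom (i + 1)) := hvi (i + 1) hmid (by omega)
  have hby : succ v (nom' j) (nom' (i + 1)) := hvj (i + 1) hmid (by omega)
  have hxb : succ v (nom (i + 1)) (nom' j) :=
    hsp _ _ _ (axis _ _ (by omega)) (axis _ _ (by omega)) hax
  have hay : succ v (nom i) (nom' (i + 1)) := _root_.trans hax (_root_.trans hxb hby)
  have hyb : succ v (nom' (i + 1)) (nom' j) :=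
    hsp _ _ _ (axis _ _ (by omega)) (axis _ _ (by omega)) hay
  exact asymm_of (succ v) hyb hby

lemma mem_BetweenFor_of_mem_votesFor_succ (hsto : ∀ v : V, IsStrictTotalOrder C (succ v))
    (hPASP : ∀ v : V, PASPVote party (succ v)) {nom nom' : ℕ → C}
    (hval : ValidNom party k nom) (hval' : ValidNom party k nom') {j : ℕ}
    (hj : j ∈ Finset.Icc 1 k) (hj' : j + 1 ∈ Finset.Icc 1 k) {v : V}
    (hv : v ∈ votesFor succ k nom j) (hv' : v ∈ votesFor succ k nom' (j + 1)) :
    v ∈ BetweenFor party succ k j := by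
  refine ⟨fun hA => ?_, fun hA => ?_, fun nom'' hval'' => ?_⟩
  · exact absurd (eq_of_mem_votesFor hsto hj hj' (hA nom' hval') hv') (by omega)
  · exact absurd (eq_of_mem_votesFor hsto hj hj' hv (hA nom hval)) (by omega)
  · have hk : 1 ≤ k := (Finset.mem_Icc.1 hj).1.trans (Finset.mem_Icc.1 hj).2
    obtain ⟨i, hi, hvi⟩ := exists_mem_votesFor hsto hval'' hk v
    have := le_succ_of_mem_votesFor hsto hPASP hval hval'' hj hi hv hvi
    have := le_succ_of_mem_votesFor hsto hPASP hval'' hval' hi hj' hvi hv'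
    obtain rfl | rfl : i = j ∨ i = j + 1 := by omega
    exacts [Or.inl hvi, Or.inr hvi]

lemma mem_AlwaysFor_or_mem_BetweenFor (hsto : ∀ v : V, IsStrictTotalOrder C (succ v))
    (hPASP : ∀ v : V, PASPVote party (succ v)) {nom : ℕ → C} (hval : ValidNom party k nom)
    {j : ℕ} (hj : j ∈ Finset.Icc 1 k) {v : V} (hv : v ∈ votesFor succ k nom j) :
    v ∈ AlwaysFor party succ k j ∨ (2 ≤ j ∧ v ∈ BetweenFor party succ k (j - 1)) ∨
      (j + 1 ≤ k ∧ v ∈ BetweenFor party succ k j) := by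
  have hj₀ := Finset.mem_Icc.1 hj
  by_cases hup :
      ∃ nom', ValidNom party k nom' ∧ j + 1 ≤ k ∧ v ∈ votesFor succ k nom' (j + 1)
  · obtain ⟨nom', hval', hjk, hv'⟩ := hup
    exact Or.inr (Or.inr ⟨hjk, mem_BetweenFor_of_mem_votesFor_succ hsto hPASP hval hval' hj
      (by simp only [Finset.mem_Icc]; omega) hv hv'⟩)
  by_cases hdown :
      ∃ nom', ValidNom party k nom' ∧ 2 ≤ j ∧ v ∈ votesFor succ k nom' (j - 1)
  · obtain ⟨nom', hval', h2j, hv'⟩ := hdown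
    obtain ⟨m, rfl⟩ : ∃ m, j = m + 1 := ⟨j - 1, by omega⟩
    rw [Nat.add_sub_cancel] at hv' ⊢
    exact Or.inr (Or.inl ⟨h2j, mem_BetweenFor_of_mem_votesFor_succ hsto hPASP hval' hval
      (by simp only [Finset.mem_Icc]; omega) hj hv' hv⟩)
  refine Or.inl fun nom' hval' => ?_
  obtain ⟨i, hi, hvi⟩ := exists_mem_votesFor hsto hval' (hj₀.1.trans hj₀.2) v
  have := le_succ_of_mem_votesFor hsto hPASP hval' hval hi hj hvi hv
  have := le_succ_of_mem_votesFor hsto hPASP hval hval' hj hi hv hvi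
  have hi₀ := Finset.mem_Icc.1 hi
  obtain rfl | rfl | rfl : i + 1 = j ∨ i = j ∨ i = j + 1 := by omega
  · exact absurd ⟨nom', hval', by omega, by rwa [Nat.add_sub_cancel]⟩ hdown
  · exact hvi
  · exact absurd ⟨nom', hval', hi₀.2, hvi⟩ hup

lemma AlwaysFor_subset_Vle {i κ : ℕ} (hi : i ∈ Finset.Icc 1 κ) :
    AlwaysFor party succ k i ⊆ Vle party succ k κ :=
  Set.subset_union_of_subset_left
    (Set.subset_biUnion_of_mem (u := fun j => AlwaysFor party succ k j) hi) _

lemma BetweenFor_subset_Vle {i κ : ℕ} (hi : i ∈ Finset.Icc 1 (κ - 1)) :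
    BetweenFor party succ k i ⊆ Vle party succ k κ :=
  Set.subset_union_of_subset_right
    (Set.subset_biUnion_of_mem (u := fun j => BetweenFor party succ k j) hi) _

lemma AlwaysFor_subset_Vge {i κ : ℕ} (hi : i ∈ Finset.Icc κ k) :
    AlwaysFor party succ k i ⊆ Vge party succ k κ :=
  Set.subset_union_of_subset_left
    (Set.subset_biUnion_of_mem (u := fun j => AlwaysFor party succ k j) hi) _

lemma BetweenFor_subset_Vge {i κ : ℕ} (hi : i ∈ Finset.Icc κ (k - 1)) :
    BetweenFor party succ k i ⊆ Vge party succ k κ :=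
  Set.subset_union_of_subset_right
    (Set.subset_biUnion_of_mem (u := fun j => BetweenFor party succ k j) hi) _

lemma exists_mem_votesFor_of_mem_Vle {κ : ℕ} {v : V} (hv : v ∈ Vle party succ k κ)
    {nom : ℕ → C} (hval : ValidNom party k nom) :
    ∃ i ∈ Finset.Icc 1 κ, v ∈ votesFor succ k nom i := by
  simp only [Vle, Set.mem_union, Set.mem_iUnion, exists_prop] at hv
  rcases hv with ⟨i, hi, hA⟩ | ⟨i, hi, hB⟩
  · exact ⟨i, hi, hA nom hval⟩
  · simp only [Finset.mem_Icc] at hi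
    rcases hB.2.2 nom hval with h | h
    exacts [⟨i, by simp only [Finset.mem_Icc]; omega, h⟩,
      ⟨i + 1, by simp only [Finset.mem_Icc]; omega, h⟩]

lemma exists_mem_votesFor_of_mem_Vge (hk : 1 ≤ k) {κ : ℕ} {v : V}
    (hv : v ∈ Vge party succ k κ) {nom : ℕ → C} (hval : ValidNom party k nom) :
    ∃ i ∈ Finset.Icc κ k, v ∈ votesFor succ k nom i := by
  simp only [Vge, Set.mem_union, Set.mem_iUnion, exists_prop] at hv
  rcases hv with ⟨i, hi, hA⟩ | ⟨i, hi, hB⟩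
  · exact ⟨i, hi, hA nom hval⟩
  · simp only [Finset.mem_Icc] at hi
    rcases hB.2.2 nom hval with h | h
    exacts [⟨i, by simp only [Finset.mem_Icc]; omega, h⟩,
      ⟨i + 1, by simp only [Finset.mem_Icc]; omega, h⟩]

lemma Vle_inter_votesFor_subset (hsto : ∀ v : V, IsStrictTotalOrder C (succ v))
    {κ : ℕ} (hκ : κ ≤ k) {nom nom' : ℕ → C} (hval' : ValidNom party k nom')
    (hext : Extends κ nom nom') {j : ℕ} (hj : j ∈ Finset.Icc 1 κ) :
    Vle party succ k κ ∩ votesFor succ k nom j ⊆ votesFor succ k nom' j := by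
  rintro v ⟨hle, hv⟩
  obtain ⟨i, hi, hvi⟩ := exists_mem_votesFor_of_mem_Vle hle hval'
  have hsub : Finset.Icc 1 κ ⊆ Finset.Icc 1 k := Finset.Icc_subset_Icc le_rfl hκ
  rwa [eq_of_mem_votesFor_of_agree hsto (hsub hj) (hsub hi) (hext j hj).symm
    (hext i hi).symm hv hvi]

lemma Vge_inter_votesFor_subset (hsto : ∀ v : V, IsStrictTotalOrder C (succ v))
    {κ : ℕ} (hκ : 1 ≤ κ) {nom nom' : ℕ → C} (hval' : ValidNom party k nom')
    (hext : ExtendsR κ k nom nom') {j : ℕ} (hj : j ∈ Finset.Icc κ k) :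
    Vge party succ k κ ∩ votesFor succ k nom j ⊆ votesFor succ k nom' j := by
  rintro v ⟨hge, hv⟩
  have hk : 1 ≤ k := hκ.trans ((Finset.mem_Icc.1 hj).1.trans (Finset.mem_Icc.1 hj).2)
  obtain ⟨i, hi, hvi⟩ := exists_mem_votesFor_of_mem_Vge hk hge hval'
  have hsub : Finset.Icc κ k ⊆ Finset.Icc 1 k := Finset.Icc_subset_Icc hκ le_rfl
  rwa [eq_of_mem_votesFor_of_agree hsto (hsub hj) (hsub hi) (hext j hj).symm
    (hext i hi).symm hv hvi]

lemma votesFrom_Vle_eq_of_extends (hsto : ∀ v : V, IsStrictTotalOrder C (succ v))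
    {κ : ℕ} (hκ : κ ≤ k) {nom nom' : ℕ → C} (hval : ValidNom party k nom)
    (hval' : ValidNom party k nom') (hext : Extends κ nom nom') {j : ℕ}
    (hj : j ∈ Finset.Icc 1 κ) :
    votesFrom (Vle party succ k κ) succ k nom' j =
      votesFrom (Vle party succ k κ) succ k nom j := by
  have hext' : Extends κ nom' nom := fun i hi => (hext i hi).symm
  exact congrArg Set.ncard <| Set.Subset.antisymm
    (Set.subset_inter Set.inter_subset_left (Vle_inter_votesFor_subset hsto hκ hval hext' hj))
    (Set.subset_inter Set.inter_subset_left (Vle_inter_votesFor_subset hsto hκ hval' hext hj))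

lemma votesFrom_Vge_eq_of_extendsR (hsto : ∀ v : V, IsStrictTotalOrder C (succ v))
    {κ : ℕ} (hκ : 1 ≤ κ) {nom nom' : ℕ → C} (hval : ValidNom party k nom)
    (hval' : ValidNom party k nom') (hext : ExtendsR κ k nom nom') {j : ℕ}
    (hj : j ∈ Finset.Icc κ k) :
    votesFrom (Vge party succ k κ) succ k nom' j =
      votesFrom (Vge party succ k κ) succ k nom j := by
  have hext' : ExtendsR κ k nom' nom := fun i hi => (hext i hi).symm
  exact congrArg Set.ncard <| Set.Subset.antisymm
    (Set.subset_inter Set.inter_subset_left (Vge_inter_votesFor_subset hsto hκ hval hext' hj))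
    (Set.subset_inter Set.inter_subset_left (Vge_inter_votesFor_subset hsto hκ hval' hext hj))

lemma votesFor_subset_Vle (hsto : ∀ v : V, IsStrictTotalOrder C (succ v))
    (hPASP : ∀ v : V, PASPVote party (succ v)) {nom : ℕ → C} (hval : ValidNom party k nom)
    {j κ : ℕ} (hj : j ∈ Finset.Icc 1 k) (hjκ : j < κ) :
    votesFor succ k nom j ⊆ Vle party succ k κ := by
  intro v hv
  have hj' := Finset.mem_Icc.1 hj
  rcases mem_AlwaysFor_or_mem_BetweenFor hsto hPASP hval hj hv with hA | ⟨h2, hB⟩ | ⟨-, hB⟩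
  · exact AlwaysFor_subset_Vle (by simp only [Finset.mem_Icc]; omega) hA
  · exact BetweenFor_subset_Vle (by simp only [Finset.mem_Icc]; omega) hB
  · exact BetweenFor_subset_Vle (by simp only [Finset.mem_Icc]; omega) hB

lemma votesFor_subset_Vge (hsto : ∀ v : V, IsStrictTotalOrder C (succ v))
    (hPASP : ∀ v : V, PASPVote party (succ v)) {nom : ℕ → C} (hval : ValidNom party k nom)
    {j κ : ℕ} (hj : j ∈ Finset.Icc 1 k) (hκj : κ < j) :
    votesFor succ k nom j ⊆ Vge party succ k κ := by
  intro v hv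
  have hj' := Finset.mem_Icc.1 hj
  rcases mem_AlwaysFor_or_mem_BetweenFor hsto hPASP hval hj hv with hA | ⟨-, hB⟩ | ⟨hjk, hB⟩
  · exact AlwaysFor_subset_Vge (by simp only [Finset.mem_Icc]; omega) hA
  · exact BetweenFor_subset_Vge (by simp only [Finset.mem_Icc]; omega) hB
  · exact BetweenFor_subset_Vge (by simp only [Finset.mem_Icc]; omega) hB

lemma votesFor_subset_Vle_union_Vge (hsto : ∀ v : V, IsStrictTotalOrder C (succ v))
    (hPASP : ∀ v : V, PASPVote party (succ v)) {nom : ℕ → C} (hval : ValidNom party k nom)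
    {κ : ℕ} (hκ : κ ∈ Finset.Icc 1 k) :
    votesFor succ k nom κ ⊆ Vle party succ k κ ∪ Vge party succ k κ := by
  intro v hv
  have hκ' := Finset.mem_Icc.1 hκ
  rcases mem_AlwaysFor_or_mem_BetweenFor hsto hPASP hval hκ hv with
    hA | ⟨h2, hB⟩ | ⟨hκk, hB⟩
  · exact Or.inl (AlwaysFor_subset_Vle (by simp only [Finset.mem_Icc]; omega) hA)
  · exact Or.inl (BetweenFor_subset_Vle (by simp only [Finset.mem_Icc]; omega) hB)
  · exact Or.inr (BetweenFor_subset_Vge (by simp only [Finset.mem_Icc]; omega) hB)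

lemma Vle_inter_Vge_subset (hsto : ∀ v : V, IsStrictTotalOrder C (succ v)) (hk : 1 ≤ k)
    (κ : ℕ) :
    Vle party succ k κ ∩ Vge party succ k κ ⊆ AlwaysFor party succ k κ := by
  rintro v ⟨hle, hge⟩ nom hval
  obtain ⟨i, hi, hvi⟩ := exists_mem_votesFor_of_mem_Vle hle hval
  obtain ⟨i', hi', hvi'⟩ := exists_mem_votesFor_of_mem_Vge hk hge hval
  have hi := Finset.mem_Icc.1 hi
  have hi' := Finset.mem_Icc.1 hi'
  have := eq_of_mem_votesFor hsto (by simp only [Finset.mem_Icc]; omega)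
    (by simp only [Finset.mem_Icc]; omega) hvi hvi'
  obtain rfl : i' = κ := by omega
  exact hvi'

lemma votesFrom_Vle_add_votesFrom_Vge [Finite V] (hsto : ∀ v : V, IsStrictTotalOrder C (succ v))
    (hPASP : ∀ v : V, PASPVote party (succ v)) {nom : ℕ → C} (hval : ValidNom party k nom)
    {κ : ℕ} (hκ : κ ∈ Finset.Icc 1 k) :
    votesFrom (Vle party succ k κ) succ k nom κ + votesFrom (Vge party succ k κ) succ k nom κ =
      score succ k nom κ + (AlwaysFor party succ k κ).ncard := by
  have hκ' := Finset.mem_Icc.1 hκ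
  have hunion : Vle party succ k κ ∩ votesFor succ k nom κ ∪
      Vge party succ k κ ∩ votesFor succ k nom κ = votesFor succ k nom κ := by
    rw [← Set.union_inter_distrib_right]
    exact Set.inter_eq_right.2 (votesFor_subset_Vle_union_Vge hsto hPASP hval hκ)
  have hinter : Vle party succ k κ ∩ votesFor succ k nom κ ∩
      (Vge party succ k κ ∩ votesFor succ k nom κ) = AlwaysFor party succ k κ := by
    refine Set.Subset.antisymm
      (fun v hv => Vle_inter_Vge_subset hsto (by omega) κ ⟨hv.1.1, hv.2.1⟩) ?_
    intro v hA
    have hv := hA nom hval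
    exact ⟨⟨AlwaysFor_subset_Vle (by simp only [Finset.mem_Icc]; omega) hA, hv⟩,
      AlwaysFor_subset_Vge (by simp only [Finset.mem_Icc]; omega) hA, hv⟩
  rw [votesFrom, votesFrom, ← Set.ncard_union_add_ncard_inter, hunion, hinter, score]

lemma leftPPViableScore_of_isWinner [Finite V] (hsto : ∀ v : V, IsStrictTotalOrder C (succ v))
    {nom : ℕ → C} (hval : ValidNom party k nom) {κ : ℕ} (hκ : κ ∈ Finset.Icc 1 k)
    (hwin : IsWinner succ k nom κ) :
    LeftPPViableScore party succ k (score succ k nom κ) κ (nom κ)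
      (votesFrom (Vle party succ k κ) succ k nom κ) := by
  have hκ' := Finset.mem_Icc.1 hκ
  refine ⟨nom, ⟨fun j hj => hval j (Finset.Icc_subset_Icc le_rfl hκ'.2 hj),
    fun nom' hval' hext j hj => ?_⟩, rfl, fun nom' hval' hext =>
      votesFrom_Vle_eq_of_extends hsto hκ'.2 hval hval' hext (by simp [hκ'.1])⟩
  have hj' := Finset.mem_Icc.1 hj
  calc votesFrom (Vle party succ k κ) succ k nom' j
      = votesFrom (Vle party succ k κ) succ k nom j :=
        votesFrom_Vle_eq_of_extends hsto hκ'.2 hval hval' hext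
          (by simp only [Finset.mem_Icc]; omega)
    _ ≤ score succ k nom j := Set.ncard_le_ncard Set.inter_subset_right
    _ ≤ score succ k nom κ := hwin j (by simp only [Finset.mem_Icc]; omega)

lemma rightPPViableScore_of_isWinner [Finite V] (hsto : ∀ v : V, IsStrictTotalOrder C (succ v))
    {nom : ℕ → C} (hval : ValidNom party k nom) {κ : ℕ} (hκ : κ ∈ Finset.Icc 1 k)
    (hwin : IsWinner succ k nom κ) :
    RightPPViableScore party succ k (score succ k nom κ) κ (nom κ)
      (votesFrom (Vge party succ k κ) succ k nom κ) := by
  have hκ' := Finset.mem_Icc.1 hκ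
  refine ⟨nom, ⟨fun j hj => hval j (Finset.Icc_subset_Icc hκ'.1 le_rfl hj),
    fun nom' hval' hext j hj => ?_⟩, rfl, fun nom' hval' hext =>
      votesFrom_Vge_eq_of_extendsR hsto hκ'.1 hval hval' hext (by simp [hκ'.2])⟩
  have hj' := Finset.mem_Icc.1 hj
  calc votesFrom (Vge party succ k κ) succ k nom' j
      = votesFrom (Vge party succ k κ) succ k nom j :=
        votesFrom_Vge_eq_of_extendsR hsto hκ'.1 hval hval' hext
          (by simp only [Finset.mem_Icc]; omega)
    _ ≤ score succ k nom j := Set.ncard_le_ncard Set.inter_subset_right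
    _ ≤ score succ k nom κ := hwin j (by simp only [Finset.mem_Icc]; omega)

lemma isWinner_of_PPFeasible (hsto : ∀ v : V, IsStrictTotalOrder C (succ v))
    (hPASP : ∀ v : V, PASPVote party (succ v)) {nom cl cr : ℕ → C}
    (hval : ValidNom party k nom) {κ s : ℕ} (hs : score succ k nom κ = s)
    (hL : LeftPPFeasible party succ k s κ cl) (hextL : Extends κ cl nom)
    (hR : RightPPFeasible party succ k s κ cr) (hextR : ExtendsR κ k cr nom) :
    IsWinner succ k nom κ := by
  intro j hj
  have hj' := Finset.mem_Icc.1 hj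
  rcases lt_trichotomy j κ with hjκ | rfl | hκj
  · calc score succ k nom j = votesFrom (Vle party succ k κ) succ k nom j :=
          congrArg Set.ncard
            (Set.inter_eq_right.2 (votesFor_subset_Vle hsto hPASP hval hj hjκ)).symm
      _ ≤ s := hL.2 nom hval hextL j (by simp only [Finset.mem_Icc]; omega)
      _ = score succ k nom κ := hs.symm
  · exact le_rfl
  · calc score succ k nom j = votesFrom (Vge party succ k κ) succ k nom j :=
          congrArg Set.ncard
            (Set.inter_eq_right.2 (votesFor_subset_Vge hsto hPASP hval hj hκj)).symm
      _ ≤ s := hR.2 nom hval hextR j (by simp only [Finset.mem_Icc]; omega)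
      _ = score succ k nom κ := hs.symm

lemma exists_isWinner_of_PPViableScores [Finite V]
    (hsto : ∀ v : V, IsStrictTotalOrder C (succ v)) (hPASP : ∀ v : V, PASPVote party (succ v))
    {κ s sl sr : ℕ} (hκ : κ ∈ Finset.Icc 1 k) {c : C}
    (hsum : sl + sr = s + (AlwaysFor party succ k κ).ncard)
    (hL : LeftPPViableScore party succ k s κ c sl)
    (hR : RightPPViableScore party succ k s κ c sr) :
    ∃ nom : ℕ → C, ValidNom party k nom ∧ nom κ = c ∧
      IsWinner succ k nom κ ∧ score succ k nom κ = s := by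
  classical
  obtain ⟨cl, hLf, hcl, hLs⟩ := hL
  obtain ⟨cr, hRf, hcr, hRs⟩ := hR
  let nom : ℕ → C := fun j => if j ≤ κ then cl j else cr j
  have hextL : Extends κ cl nom := fun j hj => if_pos (Finset.mem_Icc.1 hj).2
  have hextR : ExtendsR κ k cr nom := by
    intro j hj
    rcases (Finset.mem_Icc.1 hj).1.eq_or_lt with rfl | hκj
    · simp [nom, hcl, hcr]
    · exact if_neg (not_le.2 hκj)
  have hval : ValidNom party k nom := by
    intro j hj
    have hj' := Finset.mem_Icc.1 hj
    by_cases hjκ : j ≤ κ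
    · rw [hextL j (by simp only [Finset.mem_Icc]; omega)]
      exact hLf.1 j (by simp only [Finset.mem_Icc]; omega)
    · rw [hextR j (by simp only [Finset.mem_Icc]; omega)]
      exact hRf.1 j (by simp only [Finset.mem_Icc]; omega)
  have hscore : score succ k nom κ = s := by
    have := votesFrom_Vle_add_votesFrom_Vge hsto hPASP hval hκ
    rw [hLs nom hval hextL, hRs nom hval hextR] at this
    omega
  refine ⟨nom, hval, (hextL κ (by simp [(Finset.mem_Icc.1 hκ).1])).trans hcl,
    isWinner_of_PPFeasible hsto hPASP hval hscore hLf hextL hRf hextR, hscore⟩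

end PartyAlignedSinglePeaked

theorem possible_winner_iff_PPviable_scores_general
    {C V : Type*} [Fintype V] {k : ℕ}
    (party : C → ℕ)
    (succ : V → C → C → Prop) (hsto : ∀ v : V, IsStrictTotalOrder C (succ v))
    (hPASP : ∀ v : V, PASPVote party (succ v))
    (κ : ℕ) (hκ : κ ∈ Finset.Icc 1 k) (sstar : ℕ)
    (cκ : C) :
    (∃ nom : ℕ → C, ValidNom party k nom ∧ nom κ = cκ ∧
      IsWinner succ k nom κ ∧ score succ k nom κ = sstar) ↔
    (∃ sl sr : ℕ, sl + sr = sstar + (AlwaysFor party succ k κ).ncard ∧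
      LeftPPViableScore party succ k sstar κ cκ sl ∧
      RightPPViableScore party succ k sstar κ cκ sr) := by
  constructor
  · rintro ⟨nom, hval, rfl, hwin, rfl⟩
    exact ⟨_, _, votesFrom_Vle_add_votesFrom_Vge hsto hPASP hval hκ,
      leftPPViableScore_of_isWinner hsto hval hκ hwin,
      rightPPViableScore_of_isWinner hsto hval hκ hwin⟩
  · rintro ⟨sl, sr, hsum, hL, hR⟩
    exact exists_isWinner_of_PPViableScores hsto hPASP hκ hsum hL hR

/-- A candidate `cκ` of the distinguished party `P_κ` is a Plurality winner with
score `s*` in the reduced election of some nomination scheme iff there are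
non-negative integers `s_l`, `s_r` with `s_l + s_r − |V^{P_κ}| = s*` such that
`s_l` is a left-PP-viable and `s_r` a right-PP-viable score for `cκ`. -/
theorem possible_winner_iff_PPviable_scores
    {C V : Type*} [Fintype C] [Fintype V] {k : ℕ}
    (party : C → ℕ) (hpr : ∀ c : C, party c ∈ Finset.Icc 1 k)
    (hne : ∀ i ∈ Finset.Icc 1 k, ∃ c : C, party c = i)
    (succ : V → C → C → Prop) (hsto : ∀ v : V, IsStrictTotalOrder C (succ v))
    (hPASP : ∀ v : V, PASPVote party (succ v))
    (κ : ℕ) (hκ : κ ∈ Finset.Icc 1 k) (sstar : ℕ)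
    (cκ : C) (hcκ : party cκ = κ) :
    (∃ nom : ℕ → C, ValidNom party k nom ∧ nom κ = cκ ∧
      IsWinner succ k nom κ ∧ score succ k nom κ = sstar) ↔
    (∃ sl sr : ℕ, sl + sr = sstar + (AlwaysFor party succ k κ).ncard ∧
      LeftPPViableScore party succ k sstar κ cκ sl ∧
      RightPPViableScore party succ k sstar κ cκ sr) :=
  possible_winner_iff_PPviable_scores_general party succ hsto hPASP κ hκ sstar cκ
end
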